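/- If r1 > r2 and r1·r2 > 0, then ψ_{r1,r2}(t) = r1 - r2 + r2·e^{r1·t} - r1·e^{r2·t} > 0 for every real t ≠ 0. -/

import Mathlib

/-!
Write `ψ(t) = r₂ (e^{r₁t} - 1) - r₁ (e^{r₂t} - 1) = r₁r₂t (s(r₁t) - s(r₂t))` with
`s(x) = (e^x - 1) / x` the slope of the secant of `exp` from `0` to `x`. As `exp` is strictly
convex, `s` is strictly increasing across `0`, and `r₁t - r₂t` has the sign of `t`, as does
`r₁r₂t`; so the product is positive.
-/

noncomputable def psi (r1 r2 t : ℝ) : ℝ :=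
  r1 - r2 + r2 * Real.exp (r1 * t) - r1 * Real.exp (r2 * t)

open Set

theorem StrictConvexOn.mul_sub_lt_mul_sub {f : ℝ → ℝ} (hf : StrictConvexOn ℝ univ f)
    {r1 r2 t : ℝ} (h12 : r2 < r1) (hprod : 0 < r1 * r2) (ht : t ≠ 0) :
    r1 * (f (r2 * t) - f 0) < r2 * (f (r1 * t) - f 0) := by
  have secant (x y : ℝ) (hx : x ≠ 0) (hy : y ≠ 0) (hxy : x < y) :
      (f x - f 0) / x < (f y - f 0) / y := by
    simpa using hf.secant_strict_mono (mem_univ 0) (mem_univ x) (mem_univ y) hx hy hxy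
  have h1t : r1 * t ≠ 0 := mul_ne_zero (left_ne_zero_of_mul hprod.ne') ht
  have h2t : r2 * t ≠ 0 := mul_ne_zero (right_ne_zero_of_mul hprod.ne') ht
  have scale (r : ℝ) (hr : r * t ≠ 0) :
      f (r * t) - f 0 = r * t * ((f (r * t) - f 0) / (r * t)) :=
    (mul_div_cancel₀ _ hr).symm
  rw [scale r1 h1t, scale r2 h2t]
  rcases ht.lt_or_gt with ht | ht
  · have hslope := secant _ _ h1t h2t (mul_lt_mul_of_neg_right h12 ht)
    have hneg : r1 * r2 * t < 0 := mul_neg_of_pos_of_neg hprod ht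
    nlinarith
  · have hslope := secant _ _ h2t h1t (mul_lt_mul_of_pos_right h12 ht)
    have hpos : 0 < r1 * r2 * t := mul_pos hprod ht
    nlinarith

theorem psi_pos (r1 r2 : ℝ) (h1 : r1 > r2) (h2 : r1 * r2 > 0) :
    ∀ t : ℝ, t ≠ 0 → psi r1 r2 t > 0 := by
  intro t ht
  have key := strictConvexOn_exp.mul_sub_lt_mul_sub h1 h2 ht
  simp only [psi, Real.exp_zero] at key ⊢
  linarith
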